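/- There exists a sequence $\{D_n\}_n$ of diagonal (hence normal) matrices admitting singular value symbol $1$ such that $\{D_n + I_n\}_n$ admits no singular value symbol; concretely $D_{2n} = I_{2n}$, $D_{2n+1} = -I_{2n+1}$. Consequently $\{D_n\}_n$ admits no normal form: there is no unitary sequence $\{U_n\}_n$, diagonal sequence $\{E_n\}_n$ with a spectral symbol $k$, such that $\{U_n^H E_n U_n\}_n$ is acs equivalent to $\{D_n\}_n$. -/

import Mathlib

open MeasureTheory Filter Matrix

noncomputable def singVals {n : ℕ} (A : Matrix (Fin n) (Fin n) ℂ) : Fin n → ℝ :=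
  fun i => Real.sqrt ((Matrix.isHermitian_conjTranspose_mul_self A).eigenvalues i)

/-- `A ∼_σ k` on the domain `Dset`: singular value distribution. -/
def SingSymb {α : Type*} [MeasureSpace α] (Dset : Set α)
    (A : ∀ n : ℕ, Matrix (Fin n) (Fin n) ℂ) (k : α → ℂ) : Prop :=
  ∀ F : C(ℝ, ℂ), HasCompactSupport F →
    Tendsto (fun n : ℕ => (n : ℂ)⁻¹ * ∑ i, F (singVals (A n) i)) atTop
      (nhds (((volume Dset).toReal)⁻¹ • ∫ x in Dset, F ‖k x‖))

/-- `A ∼_λ k` on the domain `Dset`: eigenvalue (Weyl) distribution, where the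
eigenvalues of `A n` (with multiplicity) are the roots of its characteristic polynomial. -/
def SpecSymb {α : Type*} [MeasureSpace α] (Dset : Set α)
    (A : ∀ n : ℕ, Matrix (Fin n) (Fin n) ℂ) (k : α → ℂ) : Prop :=
  ∀ F : C(ℂ, ℂ), HasCompactSupport F →
    Tendsto (fun n : ℕ =>
        (n : ℂ)⁻¹ * (Multiset.map (fun z => F z) (A n).charpoly.roots).sum) atTop
      (nhds (((volume Dset).toReal)⁻¹ • ∫ x in Dset, F (k x)))

/-- Zero-distributed sequence: `A ∼_σ 0`. -/
def ZeroDist (A : ∀ n : ℕ, Matrix (Fin n) (Fin n) ℂ) : Prop :=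
  ∀ F : C(ℝ, ℂ), HasCompactSupport F →
    Tendsto (fun n : ℕ => (n : ℂ)⁻¹ * ∑ i, F (singVals (A n) i)) atTop (nhds (F 0))

open scoped Topology

/-!
Take `d n = (-1)^n` (constant in `i`). All `|d n i| = 1`, so `{D_n}` has singular value symbol `1`,
while `D_n + I_n` is `2 I` or `0` according to the parity of `n`, so the averages of the tent
function `max 0 (1 - |x|)` over its singular values alternate between `0` and `1`.

Since `D_n` is scalar, `U_nᴴ E_n U_n - D_n = U_nᴴ (E_n - (-1)^n) U_n` has the singular values
`|e n i - (-1)^n|`. If this sequence is zero-distributed, the eigenvalues of `E_n` cluster at `1`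
for even `n` and at `-1` for odd `n`. Testing the spectral symbol with the tent centred at `1`,
the averages then tend to `1` along even `n` and to `0` along odd `n`, because
`tent |z - 1| + tent |z + 1| ≤ 1`: the spectral symbol cannot exist.
-/

section

variable {ι R : Type*} [Fintype ι] [DecidableEq ι] [CommRing R]

open Polynomial in
theorem roots_charpoly_diagonal [IsDomain R] (v : ι → R) :
    (diagonal v).charpoly.roots = Finset.univ.val.map v := by
  rw [charpoly_diagonal, roots_prod _ _ (by simp [Finset.prod_ne_zero_iff, X_sub_C_ne_zero])]
  simp

theorem charpoly_conjTranspose_mul_mul [StarRing R] {U : Matrix ι ι R} (hU : U ∈ unitaryGroup ι R)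
    (A : Matrix ι ι R) :
    (Uᴴ * A * U).charpoly = A.charpoly := by
  rw [charpoly_mul_comm, ← mul_assoc, ← star_eq_conjTranspose, mem_unitaryGroup_iff.mp hU, one_mul]

theorem unitary_conj_diagonal_sub_diagonal_const [StarRing R] {U : Matrix ι ι R}
    (hU : U ∈ unitaryGroup ι R) (e : ι → R) (c : R) :
    Uᴴ * diagonal e * U - diagonal (fun _ => c) = Uᴴ * diagonal (fun i => e i - c) * U := by
  have hc : diagonal (fun _ => c) = Uᴴ * diagonal (fun _ => c) * U := by
    rw [← smul_one_eq_diagonal, Matrix.mul_smul, mul_one, Matrix.smul_mul,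
      ← star_eq_conjTranspose, mem_unitaryGroup_iff'.mp hU]
  rw [hc, ← sub_mul, ← mul_sub, diagonal_sub]

end

theorem map_singVals_unitary_conj_diagonal {n : ℕ} {U : Matrix (Fin n) (Fin n) ℂ}
    (hU : U ∈ unitaryGroup (Fin n) ℂ) (v : Fin n → ℂ) :
    Finset.univ.val.map (singVals (Uᴴ * diagonal v * U)) = Finset.univ.val.map (‖v ·‖) := by
  set B := Uᴴ * diagonal v * U
  have hB : Bᴴ * B = Uᴴ * diagonal (fun i => ((‖v i‖ ^ 2 : ℝ) : ℂ)) * U := by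
    have hUU : U * Uᴴ = 1 := by rw [← star_eq_conjTranspose]; exact mem_unitaryGroup_iff.mp hU
    simp only [B, conjTranspose_mul, conjTranspose_conjTranspose, mul_assoc]
    rw [← mul_assoc U Uᴴ, hUU, one_mul, ← mul_assoc (diagonal v)ᴴ, diagonal_conjTranspose,
      diagonal_mul_diagonal]
    congr 3
    funext i
    simp [Complex.conj_mul']
  have hroots : Finset.univ.val.map (fun i => ((‖v i‖ ^ 2 : ℝ) : ℂ))
      = Finset.univ.val.map
        (RCLike.ofReal ∘ (isHermitian_conjTranspose_mul_self B).eigenvalues) := by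
    rw [← (isHermitian_conjTranspose_mul_self B).roots_charpoly_eq_eigenvalues, hB,
      charpoly_conjTranspose_mul_mul hU, roots_charpoly_diagonal]
  have := congrArg (Multiset.map fun z : ℂ => √z.re) hroots
  rw [Multiset.map_map, Multiset.map_map] at this
  convert this.symm using 2
  · simp [singVals]
  · simp only [Function.comp_apply, Complex.ofReal_re, Real.sqrt_sq (norm_nonneg _)]

theorem sum_singVals_unitary_conj_diagonal {M : Type*} [AddCommMonoid M] {n : ℕ}
    {U : Matrix (Fin n) (Fin n) ℂ} (hU : U ∈ unitaryGroup (Fin n) ℂ) (v : Fin n → ℂ) (F : ℝ → M) :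
    ∑ i, F (singVals (Uᴴ * diagonal v * U) i) = ∑ i, F ‖v i‖ := by
  have := congrArg (fun s => (s.map F).sum) (map_singVals_unitary_conj_diagonal hU v)
  simpa only [Multiset.map_map, Function.comp_def, ← Finset.sum_eq_multiset_sum] using this

theorem sum_singVals_diagonal {M : Type*} [AddCommMonoid M] {n : ℕ} (v : Fin n → ℂ) (F : ℝ → M) :
    ∑ i, F (singVals (diagonal v) i) = ∑ i, F ‖v i‖ := by
  simpa using sum_singVals_unitary_conj_diagonal (one_mem _) v F

theorem sum_roots_charpoly_diagonal {M : Type*} [AddCommMonoid M] {n : ℕ} (v : Fin n → ℂ)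
    (F : ℂ → M) : ((diagonal v).charpoly.roots.map F).sum = ∑ i, F (v i) := by
  rw [roots_charpoly_diagonal, Multiset.map_map, Finset.sum_eq_multiset_sum]; rfl

theorem avg_singVals_diagonal_of_norm_eq {n : ℕ} (hn : n ≠ 0) {v : Fin n → ℂ} {r : ℝ}
    (hv : ∀ i, ‖v i‖ = r) (F : ℝ → ℂ) : (n : ℂ)⁻¹ * ∑ i, F (singVals (diagonal v) i) = F r := by
  rw [sum_singVals_diagonal, Finset.sum_congr rfl fun i _ => congrArg F (hv i)]
  simp [hn]

theorem singSymb_diagonal_of_norm_eq {α : Type*} [MeasureSpace α] {Dset : Set α}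
    (h0 : volume Dset ≠ 0) (htop : volume Dset ≠ ⊤) {d : ∀ n : ℕ, Fin n → ℂ} {c : ℂ}
    (hd : ∀ n i, ‖d n i‖ = ‖c‖) : SingSymb Dset (fun n => diagonal (d n)) (fun _ => c) := by
  intro F _
  have hlim : ((volume Dset).toReal)⁻¹ • ∫ _ in Dset, F ‖c‖ = F ‖c‖ := by
    rw [setIntegral_const, measureReal_def, smul_smul,
      inv_mul_cancel₀ (ENNReal.toReal_ne_zero.mpr ⟨h0, htop⟩), one_smul]
  rw [hlim]
  refine tendsto_const_nhds.congr' ?_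
  filter_upwards [eventually_ne_atTop 0] with n hn
  exact (avg_singVals_diagonal_of_norm_eq hn (hd n) F).symm

theorem Filter.Tendsto.comp_two_mul {X : Type*} {u : ℕ → X} {l : Filter X}
    (h : Tendsto u atTop l) : Tendsto (fun m => u (2 * m)) atTop l :=
  h.comp (strictMono_id.const_mul two_pos |>.tendsto_atTop)

theorem Filter.Tendsto.comp_two_mul_add_one {X : Type*} {u : ℕ → X} {l : Filter X}
    (h : Tendsto u atTop l) : Tendsto (fun m => u (2 * m + 1)) atTop l :=
  h.comp (StrictMono.tendsto_atTop fun _ _ h => by omega)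

theorem not_tendsto_of_eventually_even_odd {X : Type*} [TopologicalSpace X] [T2Space X]
    {u : ℕ → X} {a b : X} (hab : a ≠ b) (heven : (fun m => u (2 * m)) =ᶠ[atTop] fun _ => a)
    (hodd : (fun m => u (2 * m + 1)) =ᶠ[atTop] fun _ => b) (L : X) : ¬ Tendsto u atTop (𝓝 L) := by
  intro h
  have ha : L = a := tendsto_nhds_unique h.comp_two_mul (tendsto_const_nhds.congr' heven.symm)
  have hb : L = b :=
    tendsto_nhds_unique h.comp_two_mul_add_one (tendsto_const_nhds.congr' hodd.symm)
  exact hab (ha.symm.trans hb)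

def tent (x : ℝ) : ℝ := max 0 (1 - |x|)

theorem tent_zero : tent 0 = 1 := by simp [tent]

theorem tent_eq_zero_of_one_le_abs {x : ℝ} (hx : 1 ≤ |x|) : tent x = 0 :=
  max_eq_left (by linarith)

theorem continuous_tent : Continuous tent := by unfold tent; fun_prop

theorem tent_add_tent_le_one {a b : ℝ} (ha : 0 ≤ a) (hb : 0 ≤ b) (hab : 2 ≤ a + b) :
    tent a + tent b ≤ 1 := by
  simp only [tent, abs_of_nonneg ha, abs_of_nonneg hb, max_def]
  split_ifs <;> linarith

theorem tent_norm_sub_one_add_tent_norm_add_one_le (z : ℂ) :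
    tent ‖z - 1‖ + tent ‖z + 1‖ ≤ 1 := by
  refine tent_add_tent_le_one (norm_nonneg _) (norm_nonneg _) ?_
  calc (2 : ℝ) = ‖(z + 1) - (z - 1)‖ := by norm_num
    _ ≤ ‖z + 1‖ + ‖z - 1‖ := norm_sub_le _ _
    _ = ‖z - 1‖ + ‖z + 1‖ := add_comm _ _

theorem tent_norm_sub_eq_zero_of_notMem_closedBall {z c : ℂ} (hz : z ∉ Metric.closedBall c 1) :
    tent ‖z - c‖ = 0 :=
  tent_eq_zero_of_one_le_abs <| by
    rw [abs_norm, ← dist_eq_norm]; exact (not_le.mp hz).le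

noncomputable def tentC : C(ℝ, ℂ) :=
  ⟨fun x => (tent x : ℂ), by have := continuous_tent; fun_prop⟩

theorem tentC_apply (x : ℝ) : tentC x = tent x := rfl

theorem hasCompactSupport_tentC : HasCompactSupport tentC := by
  refine HasCompactSupport.intro (isCompact_closedBall (0 : ℝ) 1) fun x hx => ?_
  have hx' : 1 < |x| := by simpa using hx
  simp [tentC, tent_eq_zero_of_one_le_abs hx'.le]

noncomputable def tentAt (c : ℂ) : C(ℂ, ℂ) :=
  ⟨fun z => (tent ‖z - c‖ : ℂ), by have := continuous_tent; fun_prop⟩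

theorem tentAt_apply (c z : ℂ) : tentAt c z = tent ‖z - c‖ := rfl

theorem hasCompactSupport_tentAt (c : ℂ) : HasCompactSupport (tentAt c) :=
  HasCompactSupport.intro (isCompact_closedBall c 1) fun z hz => by
    simp [tentAt, tent_norm_sub_eq_zero_of_notMem_closedBall hz]

theorem ofReal_inv_mul_sum {n : ℕ} (x : Fin n → ℝ) :
    (((n : ℝ)⁻¹ * ∑ i, x i : ℝ) : ℂ) = (n : ℂ)⁻¹ * ∑ i, (x i : ℂ) := by
  push_cast; rfl

theorem inv_mul_sum_add_inv_mul_sum_le_one {n : ℕ} {f g : Fin n → ℝ} (h : ∀ i, f i + g i ≤ 1) :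
    (n : ℝ)⁻¹ * ∑ i, f i + (n : ℝ)⁻¹ * ∑ i, g i ≤ 1 := by
  rw [← mul_add, ← Finset.sum_add_distrib]
  calc _ ≤ (n : ℝ)⁻¹ * ∑ _i : Fin n, (1 : ℝ) := by gcongr with i; exact h i
    _ ≤ 1 := by
      rcases eq_or_ne n 0 with rfl | hn
      · simp
      · simp [hn]

theorem not_tendsto_avg_tent_of_alternating {e : ∀ n : ℕ, Fin n → ℂ}
    (h : Tendsto (fun n : ℕ => (n : ℝ)⁻¹ * ∑ i, tent ‖e n i - (-1) ^ n‖) atTop (𝓝 1)) (l : ℝ) :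
    ¬ Tendsto (fun n : ℕ => (n : ℝ)⁻¹ * ∑ i, tent ‖e n i - 1‖) atTop (𝓝 l) := by
  intro hl
  have heven : l = 1 :=
    tendsto_nhds_unique hl.comp_two_mul (by simpa [pow_mul] using h.comp_two_mul)
  have hodd : Tendsto (fun m => ((2 * m + 1 : ℕ) : ℝ)⁻¹ * ∑ i, tent ‖e (2 * m + 1) i + 1‖)
      atTop (𝓝 1) := by
    simpa [pow_succ, pow_mul] using h.comp_two_mul_add_one
  have hle : l + 1 ≤ 1 := le_of_tendsto' (hl.comp_two_mul_add_one.add hodd) fun m =>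
    inv_mul_sum_add_inv_mul_sum_le_one fun i => tent_norm_sub_one_add_tent_norm_add_one_le _
  linarith

/-- There is a diagonal (hence normal) sequence `{D_n}` with singular value
symbol `1` such that `{D_n + I_n}` admits no singular value symbol (the
empirical singular value distributions do not converge); consequently `{D_n}`
admits no normal form: no unitary sequence `{U_n}` and diagonal sequence
`{E_n}` with a spectral symbol `k` make `{U_nᴴ E_n U_n}` acs equivalent to `{D_n}`. -/
theorem exists_no_normal_form :
    ∃ d : ∀ n : ℕ, Fin n → ℂ,
      SingSymb (Set.Icc (0:ℝ) 1) (fun n => Matrix.diagonal (d n)) (fun _ => (1:ℂ)) ∧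
      (∃ F : C(ℝ, ℂ), HasCompactSupport F ∧
        ∀ L : ℂ, ¬ Tendsto
          (fun n : ℕ => (n : ℂ)⁻¹ *
            ∑ i, F (singVals (Matrix.diagonal (d n) + (1 : Matrix (Fin n) (Fin n) ℂ)) i))
          atTop (nhds L)) ∧
      ∀ (q : ℕ) (Dset : Set (EuclideanSpace ℝ (Fin q))),
        0 < volume Dset → volume Dset < ⊤ →
        ∀ U : ∀ n : ℕ, Matrix (Fin n) (Fin n) ℂ,
          (∀ n, U n ∈ Matrix.unitaryGroup (Fin n) ℂ) →
          ∀ (e : ∀ n : ℕ, Fin n → ℂ) (k : EuclideanSpace ℝ (Fin q) → ℂ),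
            SpecSymb Dset (fun n => Matrix.diagonal (e n)) k →
            ¬ ZeroDist (fun n =>
                (U n)ᴴ * Matrix.diagonal (e n) * U n - Matrix.diagonal (d n)) := by
  refine ⟨fun n _ => (-1 : ℂ) ^ n, singSymb_diagonal_of_norm_eq (by simp) (by simp) (by simp),
    ⟨tentC, hasCompactSupport_tentC, ?_⟩, ?_⟩
  · refine not_tendsto_of_eventually_even_odd zero_ne_one ?_ (.of_forall fun m => ?_)
    · filter_upwards [eventually_ne_atTop 0] with m hm
      rw [← diagonal_one, diagonal_add,
        avg_singVals_diagonal_of_norm_eq (by omega) (r := 2) fun _ => by norm_num [pow_mul]]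
      simp [tentC_apply, tent_eq_zero_of_one_le_abs]
    · dsimp only
      rw [← diagonal_one, diagonal_add,
        avg_singVals_diagonal_of_norm_eq (by omega) (r := 0) fun _ => by
          norm_num [pow_succ, pow_mul]]
      simp [tentC_apply, tent_zero]
  · intro q Dset _ _ U hU e k hspec hzero
    have hdist := hzero tentC hasCompactSupport_tentC
    simp only [unitary_conj_diagonal_sub_diagonal_const (hU _),
      sum_singVals_unitary_conj_diagonal (hU _)] at hdist
    rw [tentC_apply, tent_zero] at hdist
    simp only [tentC_apply, ← ofReal_inv_mul_sum, tendsto_ofReal_iff] at hdist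
    have hspec' := hspec (tentAt 1) (hasCompactSupport_tentAt 1)
    simp only [sum_roots_charpoly_diagonal, tentAt_apply, ← ofReal_inv_mul_sum] at hspec'
    exact not_tendsto_avg_tent_of_alternating hdist _
      (((Complex.continuous_re.tendsto _).comp hspec').congr fun n => Complex.ofReal_re _)
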